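/- arXiv:0805.0726 — 4 statements merged into one kernel-verified Lean document; each statement's English description precedes it below -/
import Mathlib

section
/- In an SP-structure satisfying Symmetry, Non-negativity, Boundedness, and O-Projection, p(x,x) = 1 for every state x. -/
variable {Ω : Type*}

def IsOrtho (p : Ω → Ω → ℝ) (A : Set Ω) : Prop :=
  ∀ x ∈ A, ∀ y ∈ A, x ≠ y → p x y = 0

noncomputable def pSet (p : Ω → Ω → ℝ) (x : Ω) (A : Set Ω) : ℝ :=
  ∑' a : A, p x a

def Symm (p : Ω → Ω → ℝ) : Prop := ∀ x y, p x y = p y x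

def Nonneg (p : Ω → Ω → ℝ) : Prop := ∀ x y, 0 ≤ p x y

def Bounded (p : Ω → Ω → ℝ) : Prop :=
  ∀ (x : Ω) (A : Set Ω), IsOrtho p A →
    Summable (fun a : A => p x a) ∧ pSet p x A ≤ 1

def OProj (p : Ω → Ω → ℝ) : Prop :=
  ∀ (x : Ω) (A : Set Ω), IsOrtho p A → pSet p x A < 1 →
    ∃ y, pSet p y A = 0 ∧ pSet p x A + p x y = 1

def Factor (p : Ω → Ω → ℝ) : Prop :=
  ∀ (x y z : Ω) (A : Set Ω), IsOrtho p A → pSet p y A = 1 → pSet p z A = 1 →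
    p x y = pSet p x A → p x z = p x y * p y z

def Subgen (p : Ω → Ω → ℝ) (A : Set Ω) : Set Ω := {x | pSet p x A = 1}

def IsSubspace (p : Ω → Ω → ℝ) (X : Set Ω) : Prop :=
  ∃ A, IsOrtho p A ∧ X = Subgen p A

def Standard (p : Ω → Ω → ℝ) : Prop := ∀ x y, p x y = 1 → x = y

/-! Apply Boundedness and O-Projection to the ortho-set `{x}`: the first gives `p x x ≤ 1`; if
`p x x < 1`, the second yields a state `y` with `p y x = 0` and `p x x + p x y = 1`, and symmetry
turns this into `p x x = 1`. -/

theorem isOrtho_singleton (p : Ω → Ω → ℝ) (x : Ω) : IsOrtho p {x} := by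
  rintro a rfl b rfl hab
  exact absurd rfl hab

theorem pSet_singleton (p : Ω → Ω → ℝ) (z x : Ω) : pSet p z {x} = p z x :=
  tsum_singleton x (p z)

theorem Bounded.apply_le_one {p : Ω → Ω → ℝ} (h : Bounded p) (y x : Ω) : p y x ≤ 1 := by
  simpa only [pSet_singleton] using (h y {x} (isOrtho_singleton p x)).2

theorem OProj.one_le_apply_self {p : Ω → Ω → ℝ} (h : OProj p) (hsymm : Symm p) (x : Ω) :
    1 ≤ p x x := by
  by_contra! hlt
  obtain ⟨y, hyx, hxy⟩ := h x {x} (isOrtho_singleton p x) (by rwa [pSet_singleton])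
  rw [pSet_singleton] at hyx hxy
  rw [hsymm x y, hyx, add_zero] at hxy
  exact hlt.ne hxy

theorem stmt2_general (p : Ω → Ω → ℝ) (h1 : Symm p) (h3 : Bounded p)
    (h4 : OProj p) : ∀ x : Ω, p x x = 1 := fun x =>
  le_antisymm (h3.apply_le_one x x) (h4.one_le_apply_self h1 x)

theorem stmt2 (p : Ω → Ω → ℝ) (h1 : Symm p) (h2 : Nonneg p) (h3 : Bounded p)
    (h4 : OProj p) : ∀ x : Ω, p x x = 1 :=
  stmt2_general p h1 h3 h4
end

section
/- In an SP-structure satisfying Symmetry, Non-negativity, and Boundedness, if A and B are ortho-sets with B contained in the subspace generated by A and A is finite, then B is finite and |B| ≤ |A|. -/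
variable {Ω : Type*}

/-!
Double counting: for a finite ortho-set `s` inside the subspace generated by a finite set `A`,
each `b ∈ s` contributes `∑_{a ∈ A} p b a = 1`, while by symmetry and boundedness each
`a ∈ A` receives `∑_{b ∈ s} p a b ≤ 1`. Hence `|s| ≤ |A|`, and since this bounds every finite
subset of `B`, the set `B` is finite.
-/

theorem pSet_coe_finset (p : Ω → Ω → ℝ) (x : Ω) (s : Finset Ω) :
    pSet p x ↑s = ∑ a ∈ s, p x a :=
  Finset.tsum_subtype' s (p x)

theorem finset_card_le_of_subset_subgen {p : Ω → Ω → ℝ} (h1 : Symm p) (h3 : Bounded p)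
    {A : Set Ω} (hfin : A.Finite) {s : Finset Ω} (hs : IsOrtho p ↑s)
    (hsA : ↑s ⊆ Subgen p A) : s.card ≤ A.ncard := by
  classical
  have hsum_A : ∀ b ∈ s, ∑ a ∈ hfin.toFinset, p b a = 1 := fun b hb => by
    rw [← pSet_coe_finset, hfin.coe_toFinset]
    exact hsA hb
  have hsum_s : ∀ a, ∑ b ∈ s, p a b ≤ 1 := fun a => by
    rw [← pSet_coe_finset]
    exact (h3 a s hs).2
  have : (s.card : ℝ) ≤ hfin.toFinset.card :=
    calc (s.card : ℝ) = ∑ b ∈ s, ∑ a ∈ hfin.toFinset, p b a := by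
          simp [Finset.sum_congr rfl hsum_A]
      _ = ∑ a ∈ hfin.toFinset, ∑ b ∈ s, p a b := by
          rw [Finset.sum_comm]
          simp only [h1 _ _]
      _ ≤ ∑ _a ∈ hfin.toFinset, (1 : ℝ) := Finset.sum_le_sum fun a _ => hsum_s a
      _ = hfin.toFinset.card := by simp
  rw [Set.ncard_eq_toFinset_card A hfin]
  exact_mod_cast this

theorem stmt3_general (p : Ω → Ω → ℝ) (h1 : Symm p) (h3 : Bounded p)
    (A B : Set Ω) (hB : IsOrtho p B)
    (hBA : B ⊆ Subgen p A) (hfin : A.Finite) :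
    B.Finite ∧ B.ncard ≤ A.ncard := by
  have key : ∀ s : Finset Ω, ↑s ⊆ B → s.card ≤ A.ncard := fun s hs =>
    finset_card_le_of_subset_subgen h1 h3 hfin
      (fun x hx y hy => hB x (hs hx) y (hs hy)) (hs.trans hBA)
  have hBfin : B.Finite := by
    by_contra hinf
    obtain ⟨s, hsB, hcard⟩ := Set.Infinite.exists_subset_card_eq hinf (A.ncard + 1)
    have := key s hsB
    omega
  refine ⟨hBfin, ?_⟩
  simpa [← Set.ncard_eq_toFinset_card B hBfin] using key hBfin.toFinset (by simp)

theorem stmt3 (p : Ω → Ω → ℝ) (h1 : Symm p) (h2 : Nonneg p) (h3 : Bounded p)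
    (hrefl : ∀ x, p x x = 1)
    (A B : Set Ω) (hA : IsOrtho p A) (hB : IsOrtho p B)
    (hBA : B ⊆ Subgen p A) (hfin : A.Finite) :
    B.Finite ∧ B.ncard ≤ A.ncard :=
  stmt3_general p h1 h3 A B hB hBA hfin
end

section
/- In an SP-structure satisfying Symmetry, Non-negativity, Boundedness, and O-Projection, every ortho-set A can be extended to a basis, i.e., there exists an ortho-set B ⊇ A such that p(x,B) = 1 for every state x ∈ Ω. -/
variable {Ω : Type*}

/-! Zorn's lemma gives a maximal ortho-set `B ⊇ A`. If some `x` had `p(x,B) < 1`, O-projection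
would produce a `y` orthogonal to all of `B`, so `B ∪ {y}` would be an ortho-set; maximality then
puts `y` in `B`, which is impossible for a state orthogonal to `B`. -/

section

variable {p : Ω → Ω → ℝ}

theorem exists_maximal_isOrtho_superset {A : Set Ω} (hA : IsOrtho p A) :
    ∃ B, A ⊆ B ∧ Maximal (IsOrtho p) B :=
  zorn_subset_nonempty {C | IsOrtho p C}
    (fun _ hc hchain _ => ⟨_, hchain.pairwise_sUnion.2 hc, fun _ => Set.subset_sUnion_of_mem⟩) A hA

theorem apply_eq_zero_of_pSet_eq_zero (h2 : Nonneg p) (h3 : Bounded p) {B : Set Ω}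
    (hB : IsOrtho p B) {x b : Ω} (hx : pSet p x B = 0) (hb : b ∈ B) : p x b = 0 :=
  le_antisymm (hx ▸ (h3 x B hB).1.le_tsum ⟨b, hb⟩ fun c _ => h2 x c) (h2 x b)

theorem IsOrtho.insert_of_pSet_eq_zero (h1 : Symm p) (h2 : Nonneg p) (h3 : Bounded p)
    {B : Set Ω} (hB : IsOrtho p B) {y : Ω} (hy : pSet p y B = 0) : IsOrtho p (insert y B) :=
  Set.Pairwise.insert hB fun _ hb _ =>
    have hyb := apply_eq_zero_of_pSet_eq_zero h2 h3 hB hy hb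
    ⟨hyb, h1 _ y ▸ hyb⟩

/-- Projecting `y` onto `B` gives `z ⊥ B` with `p(y,z) = 1`, whereas `y ∈ B` would force
`p(z,y) = 0`. -/
theorem notMem_of_pSet_eq_zero (h1 : Symm p) (h2 : Nonneg p) (h3 : Bounded p) (h4 : OProj p)
    {B : Set Ω} (hB : IsOrtho p B) {y : Ω} (hy : pSet p y B = 0) : y ∉ B := by
  intro hyB
  obtain ⟨z, hz, hyz⟩ := h4 y B hB (hy ▸ one_pos)
  have hzy : p z y = 0 := apply_eq_zero_of_pSet_eq_zero h2 h3 hB hz hyB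
  rw [hy, h1, hzy] at hyz
  norm_num at hyz

theorem pSet_eq_one_of_maximal (h1 : Symm p) (h2 : Nonneg p) (h3 : Bounded p) (h4 : OProj p)
    {B : Set Ω} (hB : Maximal (IsOrtho p) B) (x : Ω) : pSet p x B = 1 := by
  by_contra hne
  obtain ⟨y, hy, -⟩ := h4 x B hB.prop (lt_of_le_of_ne (h3 x B hB.prop).2 hne)
  exact notMem_of_pSet_eq_zero h1 h2 h3 h4 hB.prop hy
    (hB.mem_of_prop_insert (hB.prop.insert_of_pSet_eq_zero h1 h2 h3 hy))

end

theorem stmt4 (p : Ω → Ω → ℝ) (h1 : Symm p) (h2 : Nonneg p) (h3 : Bounded p)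
    (h4 : OProj p) (A : Set Ω) (hA : IsOrtho p A) :
    ∃ B : Set Ω, A ⊆ B ∧ IsOrtho p B ∧ ∀ x : Ω, pSet p x B = 1 := by
  obtain ⟨B, hAB, hB⟩ := exists_maximal_isOrtho_superset hA
  exact ⟨B, hAB, hB.prop, pSet_eq_one_of_maximal h1 h2 h3 h4 hB⟩
end

section
/- Let S = (Ω,p) be a standard SP-structure, B a basis for S, and f : S → S an isomorphism fixing every element of B. Then for every subset A ⊆ B with generated subspace X: (1) p(x,X) = p(f(x),X) for every state x; (2) f(X) = X; (3) if p(x,X) > 0 then t(f(x),X) = f(t(x,X)). -/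
/-! An isomorphism fixing `B` pointwise fixes every `a ∈ A ⊆ B`, so it leaves each term
`p x a` of `p(x, X)` unchanged; this gives (1), and (2) follows by surjectivity. For (3),
`f` carries a projection of `x` onto `X` to one of `f x`, and projections are unique: by
Factorization `p(x, z) = p(x, y) p(y, z)` for two of them, so `p(y, z) = 1` and `y = z`
since the structure is standard. -/

variable {Ω : Type*}

/-- `y = t(x, X)` for `X = Subgen p A`. -/
def IsProj (p : Ω → Ω → ℝ) (x : Ω) (A : Set Ω) (y : Ω) : Prop :=
  y ∈ Subgen p A ∧ p x y = pSet p x A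

theorem IsOrtho.mono {p : Ω → Ω → ℝ} {A B : Set Ω} (hB : IsOrtho p B) (hAB : A ⊆ B) :
    IsOrtho p A :=
  fun x hx y hy hxy => hB x (hAB hx) y (hAB hy) hxy

theorem pSet_map_eq_of_fixed {p : Ω → Ω → ℝ} {f : Ω → Ω} {A : Set Ω}
    (hpres : ∀ a b, p (f a) (f b) = p a b) (hfix : ∀ a ∈ A, f a = a) (x : Ω) :
    pSet p (f x) A = pSet p x A :=
  tsum_congr fun a => by rw [← hpres x a, hfix a a.2]

theorem image_Subgen_eq {p : Ω → Ω → ℝ} {f : Ω → Ω} {A : Set Ω}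
    (hsurj : Function.Surjective f) (hinv : ∀ x, pSet p (f x) A = pSet p x A) :
    f '' Subgen p A = Subgen p A := by
  have hpre : f ⁻¹' Subgen p A = Subgen p A := by
    ext x
    simp [Subgen, hinv]
  rw [← hpre, Set.image_preimage_eq _ hsurj, hpre]

theorem IsProj.map {p : Ω → Ω → ℝ} {f : Ω → Ω} {A : Set Ω} {x y : Ω}
    (hpres : ∀ a b, p (f a) (f b) = p a b) (hinv : ∀ x, pSet p (f x) A = pSet p x A)
    (hy : IsProj p x A y) : IsProj p (f x) A (f y) := by
  obtain ⟨hyA, hxy⟩ := hy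
  exact ⟨(hinv y).trans hyA, by rw [hpres, hinv, hxy]⟩

theorem IsProj.unique {p : Ω → Ω → ℝ} {A : Set Ω} {x y z : Ω}
    (hfac : Factor p) (hstd : Standard p) (hA : IsOrtho p A) (hx : 0 < pSet p x A)
    (hy : IsProj p x A y) (hz : IsProj p x A z) : y = z := by
  obtain ⟨hyA, hxy⟩ := hy
  obtain ⟨hzA, hxz⟩ := hz
  have h := hfac x y z A hA hyA hzA hxy
  rw [hxz, hxy] at h
  have hyz : p y z = 1 := by
    apply mul_left_cancel₀ hx.ne'
    linarith
  exact hstd y z hyz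

theorem stmt19_general (p : Ω → Ω → ℝ) (h5 : Factor p) (hstd : Standard p)
    (B : Set Ω) (hB : IsOrtho p B)
    (f : Ω → Ω) (hbij : Function.Bijective f)
    (hpres : ∀ a b : Ω, p (f a) (f b) = p a b)
    (hfix : ∀ b ∈ B, f b = b)
    (A : Set Ω) (hAB : A ⊆ B) :
    (∀ x : Ω, pSet p (f x) A = pSet p x A) ∧
    f '' Subgen p A = Subgen p A ∧
    (∀ x : Ω, 0 < pSet p x A →
      ∀ y y' : Ω, (y ∈ Subgen p A ∧ p x y = pSet p x A) →
        (y' ∈ Subgen p A ∧ p (f x) y' = pSet p (f x) A) → y' = f y) := by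
  have hinv : ∀ x, pSet p (f x) A = pSet p x A :=
    pSet_map_eq_of_fixed hpres fun a ha => hfix a (hAB ha)
  refine ⟨hinv, image_Subgen_eq hbij.2 hinv, fun x hx y y' hy hy' => ?_⟩
  exact IsProj.unique h5 hstd (hB.mono hAB) ((hinv x).symm ▸ hx) hy'
    (IsProj.map hpres hinv hy)

theorem stmt19 (p : Ω → Ω → ℝ) (h1 : Symm p) (h2 : Nonneg p) (h3 : Bounded p)
    (h4 : OProj p) (h5 : Factor p) (hstd : Standard p)
    (B : Set Ω) (hB : IsOrtho p B) (hbasis : ∀ x : Ω, pSet p x B = 1)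
    (f : Ω → Ω) (hbij : Function.Bijective f)
    (hpres : ∀ a b : Ω, p (f a) (f b) = p a b)
    (hfix : ∀ b ∈ B, f b = b)
    (A : Set Ω) (hAB : A ⊆ B) :
    (∀ x : Ω, pSet p (f x) A = pSet p x A) ∧
    f '' Subgen p A = Subgen p A ∧
    (∀ x : Ω, 0 < pSet p x A →
      ∀ y y' : Ω, (y ∈ Subgen p A ∧ p x y = pSet p x A) →
        (y' ∈ Subgen p A ∧ p (f x) y' = pSet p (f x) A) → y' = f y) :=
  stmt19_general p h5 hstd B hB f hbij hpres hfix A hAB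
end
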